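/- The function p(x) = (cos²x / sin x) · ln tan(π/4 + x/2) is strictly monotonically decreasing on the open interval (0, π/2). -/

import Mathlib

/-!
Since `tan (π/4 + x/2) ^ 2 = (1 + sin x) / (1 - sin x)`, the logarithm equals `artanh (sin x)`,
so with `s = sin x` the function is `q s = (1 - s²) / s · artanh s`, and `sin` maps `(0, π/2)`
increasingly onto `(0, 1)`. As `artanh' s = 1 / (1 - s²)`, one gets
`q' s = (s - (1 + s²) artanh s) / s²`, which is negative because `artanh s > s`.
-/

open Real Set Filter Topology

namespace Real

theorem hasDerivAt_artanh {x : ℝ} (hx : x ∈ Ioo (-1) 1) :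
    HasDerivAt artanh (1 - x ^ 2)⁻¹ x := by
  have h₁ : 1 + x ≠ 0 := by linarith [hx.1]
  have h₂ : 1 - x ≠ 0 := by linarith [hx.2]
  have hlog : HasDerivAt (fun y => 1 / 2 * (log (1 + y) - log (1 - y)))
      (1 / 2 * (1 / (1 + x) - -1 / (1 - x))) x := by
    refine ((HasDerivAt.log ?_ h₁).sub (HasDerivAt.log ?_ h₂)).const_mul _
    · simpa using (hasDerivAt_id x).const_add 1
    · simpa using (hasDerivAt_id x).const_sub 1
  have heq : artanh =ᶠ[𝓝 x] fun y => 1 / 2 * (log (1 + y) - log (1 - y)) := by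
    filter_upwards [isOpen_Ioo.mem_nhds hx] with y hy
    rw [artanh_eq_half_log (Ioo_subset_Icc_self hy),
      log_div (by linarith [hy.1]) (by linarith [hy.2])]
  have hval : 1 / 2 * (1 / (1 + x) - -1 / (1 - x)) = (1 - x ^ 2)⁻¹ := by
    rw [show 1 - x ^ 2 = (1 + x) * (1 - x) by ring]
    field_simp
    ring
  exact (hlog.congr_of_eventuallyEq heq).congr_deriv hval

theorem lt_artanh {x : ℝ} (h₀ : 0 < x) (h₁ : x < 1) : x < artanh x := by
  -- the first two terms `2x + 2x³/3` of the series of `log (1 + x) - log (1 - x)`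
  have hsum := sum_le_hasSum (Finset.range 2) (fun k _ => by positivity)
    (hasSum_log_sub_log_of_abs_lt_one (abs_lt.2 ⟨by linarith, h₁⟩))
  rw [artanh_eq_half_log ⟨by linarith, h₁.le⟩, log_div (by linarith) (by linarith)]
  norm_num [Finset.sum_range_succ] at hsum
  nlinarith [pow_pos h₀ 3]

theorem log_tan_pi_div_four_add_half (x : ℝ) :
    log (tan (π / 4 + x / 2)) = artanh (sin x) := by
  have hcos : cos (2 * (π / 4 + x / 2)) = -sin x := by
    rw [← cos_add_pi_div_two]
    ring_nf
  have htan : tan (π / 4 + x / 2) ^ 2 = (1 + sin x) / (1 - sin x) := by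
    rw [tan_eq_sin_div_cos, div_pow, sin_sq_eq_half_sub, cos_sq, hcos,
      show (1 : ℝ) / 2 - -sin x / 2 = (1 + sin x) / 2 by ring,
      show (1 : ℝ) / 2 + -sin x / 2 = (1 - sin x) / 2 by ring,
      div_div_div_cancel_right₀ two_ne_zero]
  rw [artanh_eq_half_log ⟨neg_one_le_sin x, sin_le_one x⟩, ← htan, log_pow]
  ring

theorem hasDerivAt_one_sub_sq_div_mul_artanh {s : ℝ} (hs : s ∈ Ioo 0 1) :
    HasDerivAt (fun s => (1 - s ^ 2) / s * artanh s)
      ((s - (1 + s ^ 2) * artanh s) / s ^ 2) s := by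
  have hs₀ : s ≠ 0 := hs.1.ne'
  have hs₁ : 1 - s ^ 2 ≠ 0 := by nlinarith [hs.1, hs.2]
  refine ((((hasDerivAt_pow 2 s).const_sub 1).div (hasDerivAt_id' s) hs₀).mul
    (hasDerivAt_artanh ⟨by linarith [hs.1], hs.2⟩)).congr_deriv ?_
  simp only [Pi.div_apply]
  field_simp
  ring

theorem strictAntiOn_one_sub_sq_div_mul_artanh :
    StrictAntiOn (fun s => (1 - s ^ 2) / s * artanh s) (Ioo 0 1) := by
  refine strictAntiOn_of_deriv_neg (convex_Ioo 0 1)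
    (fun s hs => (hasDerivAt_one_sub_sq_div_mul_artanh hs).continuousAt.continuousWithinAt)
    fun s hs => ?_
  rw [interior_Ioo] at hs
  rw [(hasDerivAt_one_sub_sq_div_mul_artanh hs).deriv]
  have hA := lt_artanh hs.1 hs.2
  exact div_neg_of_neg_of_pos (by nlinarith [hs.1, sq_nonneg s]) (pow_pos hs.1 2)

end Real

theorem stmt_10 :
    StrictAntiOn (fun x => (cos x ^ 2 / sin x) * log (tan (π/4 + x/2)))
      (Set.Ioo 0 (π/2)) := by
  have hsin : MapsTo sin (Ioo 0 (π / 2)) (Ioo 0 1) := fun x hx =>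
    ⟨sin_pos_of_pos_of_lt_pi hx.1 (by linarith [hx.2, pi_pos]),
      sin_pi_div_two ▸ sin_lt_sin_of_lt_of_le_pi_div_two (by linarith [hx.1, pi_pos]) le_rfl hx.2⟩
  simp only [cos_sq', log_tan_pi_div_four_add_half]
  exact strictAntiOn_one_sub_sq_div_mul_artanh.comp_strictMonoOn
    (strictMonoOn_sin.mono fun x hx => ⟨by linarith [hx.1, pi_pos], hx.2.le⟩) hsin
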